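/- For every integer N ≥ 2, the cardinalities a_k = #(𝒫_k) satisfy the Catalan-type recurrence a_N = Σ_{j=2}^{N} a_{j−1} · a_{N−j+1}. -/

import Mathlib

/-- A parent function on `[N] = {1, …, N}`, modeled 0-indexed on `Fin N`
(index `i : Fin N` corresponds to the book `i + 1`): `P(i) > i` for all
`1 ≤ i ≤ N - 1` and `P(N) = N`. -/
def IsParentFn (N : ℕ) (P : Fin N → Fin N) : Prop :=
  (∀ i : Fin N, (i : ℕ) + 1 < N → i < P i) ∧
  (∀ i : Fin N, (i : ℕ) + 1 = N → P i = i)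

/-- Condition (P3): for every pair `1 ≤ i < j ≤ N`, if `j < P(i)` then `P(j) ≤ P(i)`. -/
def CondP3 (N : ℕ) (P : Fin N → Fin N) : Prop :=
  ∀ i j : Fin N, i < j → j < P i → P j ≤ P i

/-- `a_N = #(𝒫_N)`, the number of parent functions on `[N]` satisfying (P3). -/
noncomputable def cardPF (N : ℕ) : ℕ :=
  Nat.card {P : Fin N → Fin N // IsParentFn N P ∧ CondP3 N P}

/-!
Let `j = P(1)`, which lies in `{2, …, N}`. By (P3), every `i` with `1 < i < j` has `P(i) ≤ j`,
so `P` restricted to `{2, …, j}`, with `P(j)` reset to `j`, is a (P3) parent function on `j - 1`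
points, and `P` restricted to `{j, …, N}` is one on `N - j + 1` points (the two blocks share `j`).
Conversely, any such pair glues back, with `P(1) = j`, to an element of `𝒫_N`. Summing over
`j` gives the recurrence.
-/

open Finset

abbrev PF (N : ℕ) := {P : Fin N → Fin N // IsParentFn N P ∧ CondP3 N P}

lemma IsParentFn.le_apply {N : ℕ} {P : Fin N → Fin N} (hP : IsParentFn N P) (i : Fin N) :
    (i : ℕ) ≤ P i := by
  rcases Nat.lt_or_ge ((i : ℕ) + 1) N with h | h
  · exact (hP.1 i h).le
  · rw [hP.2 i (by omega)]

section Decomposition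

variable {N k : ℕ}

/-- In 0-indexed terms, the block `{1, …, k}` of `P` shifted down by one, with `k` made the root. -/
def leftPart (hkN : k < N) (P : Fin N → Fin N) : Fin k → Fin k := fun t =>
  ⟨min (P ⟨t + 1, by omega⟩ : ℕ) k - 1, by have := t.isLt; omega⟩

def rightPart (P : Fin N → Fin N) : Fin (N - k) → Fin (N - k) := fun s =>
  ⟨(P ⟨s + k, by omega⟩ : ℕ) - k, by have := s.isLt; have := (P ⟨s + k, by omega⟩).isLt; omega⟩

def glue (hkN : k < N) (Q : Fin k → Fin k) (R : Fin (N - k) → Fin (N - k)) : Fin N → Fin N :=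
  fun i =>
    if hk : (i : ℕ) < k then
      if (i : ℕ) = 0 then ⟨k, hkN⟩ else ⟨Q ⟨i - 1, by omega⟩ + 1, by omega⟩
    else ⟨R ⟨i - k, by omega⟩ + k, by have := (R ⟨i - k, by omega⟩).isLt; omega⟩

variable (hkN : k < N) (Q : Fin k → Fin k) (R : Fin (N - k) → Fin (N - k)) {i : Fin N}

lemma glue_val_of_eq_zero (hk : 0 < k) (h₀ : (i : ℕ) = 0) : (glue hkN Q R i : ℕ) = k := by
  simp only [glue, dif_pos (show (i : ℕ) < k by omega), if_pos h₀]

lemma glue_val_of_lt (h₀ : (i : ℕ) ≠ 0) (hk : (i : ℕ) < k) :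
    (glue hkN Q R i : ℕ) = Q ⟨i - 1, by omega⟩ + 1 := by
  simp only [glue, dif_pos hk, if_neg h₀]

lemma glue_val_of_le (hk : k ≤ (i : ℕ)) :
    (glue hkN Q R i : ℕ) = R ⟨i - k, by omega⟩ + k := by
  simp only [glue, dif_neg (show ¬ (i : ℕ) < k by omega)]

end Decomposition

section Blocks

variable {N k : ℕ} {P : Fin N → Fin N}

lemma isParentFn_leftPart (hkN : k < N) (hP : IsParentFn N P) :
    IsParentFn k (leftPart hkN P) := by
  refine ⟨fun t ht => ?_, fun t ht => ?_⟩
  · have := hP.1 ⟨t + 1, by omega⟩ (by simp only; omega)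
    simp only [leftPart, Fin.lt_def] at this ⊢
    omega
  · have := hP.le_apply ⟨t + 1, by omega⟩
    ext
    simp only [leftPart] at this ⊢
    omega

lemma condP3_leftPart (hkN : k < N) (hP : CondP3 N P) : CondP3 k (leftPart hkN P) := by
  intro t s hts hst
  simp only [leftPart, Fin.lt_def, Fin.le_def] at hts hst ⊢
  have := hP ⟨t + 1, by omega⟩ ⟨s + 1, by omega⟩ (Fin.mk_lt_mk.2 (by omega))
    (by rw [Fin.lt_def, Fin.val_mk]; omega)
  rw [Fin.le_def] at this
  omega

lemma isParentFn_rightPart (hP : IsParentFn N P) : IsParentFn (N - k) (rightPart P) := by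
  refine ⟨fun s hs => ?_, fun s hs => ?_⟩
  · have := hP.1 ⟨s + k, by omega⟩ (by simp only; omega)
    simp only [rightPart, Fin.lt_def] at this ⊢
    omega
  · have := hP.2 ⟨s + k, by omega⟩ (by simp only; omega)
    ext
    simp only [rightPart, this]
    omega

lemma condP3_rightPart (hP : CondP3 N P) : CondP3 (N - k) (rightPart (k := k) P) := by
  intro s u hsu hus
  simp only [rightPart, Fin.lt_def, Fin.le_def] at hsu hus ⊢
  have := hP ⟨s + k, by omega⟩ ⟨u + k, by omega⟩ (Fin.mk_lt_mk.2 (by omega))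
    (by rw [Fin.lt_def, Fin.val_mk]; omega)
  rw [Fin.le_def] at this
  omega

end Blocks

section Glue

variable {N k : ℕ} (hkN : k < N) {Q : Fin k → Fin k} {R : Fin (N - k) → Fin (N - k)}

lemma isParentFn_glue (hQ : IsParentFn k Q) (hR : IsParentFn (N - k) R) :
    IsParentFn N (glue hkN Q R) := by
  refine ⟨fun i hi => ?_, fun i hi => ?_⟩
  · rw [Fin.lt_def]
    rcases Nat.lt_or_ge (i : ℕ) k with hik | hik
    · by_cases h₀ : (i : ℕ) = 0
      · rw [glue_val_of_eq_zero hkN Q R (by omega) h₀]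
        omega
      · rw [glue_val_of_lt hkN Q R h₀ hik]
        have := hQ.1 ⟨i - 1, by omega⟩ (by simp only; omega)
        rw [Fin.lt_def, Fin.val_mk] at this
        omega
    · rw [glue_val_of_le hkN Q R hik]
      have := hR.1 ⟨i - k, by omega⟩ (by simp only; omega)
      rw [Fin.lt_def, Fin.val_mk] at this
      omega
  · ext
    rw [glue_val_of_le hkN Q R (by omega), hR.2 ⟨i - k, by omega⟩ (by simp only; omega)]
    simp only
    omega

lemma condP3_glue (hQ : CondP3 k Q) (hR : CondP3 (N - k) R) : CondP3 N (glue hkN Q R) := by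
  intro i j hij hji
  rw [Fin.lt_def] at hij hji
  rw [Fin.le_def]
  rcases Nat.lt_or_ge (i : ℕ) k with hik | hik
  · by_cases h₀ : (i : ℕ) = 0
    · rw [glue_val_of_eq_zero hkN Q R (by omega) h₀] at hji ⊢
      rw [glue_val_of_lt hkN Q R (by omega) hji]
      omega
    · rw [glue_val_of_lt hkN Q R h₀ hik] at hji ⊢
      have hjk : (j : ℕ) < k := by omega
      rw [glue_val_of_lt hkN Q R (by omega) hjk]
      have := hQ ⟨i - 1, by omega⟩ ⟨j - 1, by omega⟩ (Fin.mk_lt_mk.2 (by omega))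
        (by rw [Fin.lt_def, Fin.val_mk]; omega)
      rw [Fin.le_def] at this
      omega
  · rw [glue_val_of_le hkN Q R hik] at hji ⊢
    rw [glue_val_of_le hkN Q R (by omega)]
    have := hR ⟨i - k, by omega⟩ ⟨j - k, by omega⟩ (Fin.mk_lt_mk.2 (by omega))
      (by rw [Fin.lt_def, Fin.val_mk]; omega)
    rw [Fin.le_def] at this
    omega

end Glue

section Inverse

variable {N k : ℕ} (hkN : k < N)

lemma glue_leftPart_rightPart (hk : 0 < k) {P : Fin N → Fin N}
    (hP : IsParentFn N P ∧ CondP3 N P) (hroot : (P ⟨0, by omega⟩ : ℕ) = k) :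
    glue hkN (leftPart hkN P) (rightPart P) = P := by
  funext i
  ext
  rcases Nat.lt_or_ge (i : ℕ) k with hik | hik
  · by_cases h₀ : (i : ℕ) = 0
    · rw [glue_val_of_eq_zero hkN _ _ hk h₀, ← hroot, show i = ⟨0, by omega⟩ from Fin.ext h₀]
    · rw [glue_val_of_lt hkN _ _ h₀ hik]
      have hi : (⟨i - 1 + 1, by omega⟩ : Fin N) = i := Fin.ext (by simp only; omega)
      -- (P3) at the pair (0, i) keeps `P i` inside the left block
      have hle := hP.2 ⟨0, by omega⟩ i (by rw [Fin.lt_def, Fin.val_mk]; omega)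
        (by rw [Fin.lt_def, hroot]; exact hik)
      have hlt := hP.1.1 i (by omega)
      rw [Fin.le_def, hroot] at hle
      rw [Fin.lt_def] at hlt
      simp only [leftPart, hi]
      omega
  · rw [glue_val_of_le hkN _ _ hik]
    have hi : (⟨i - k + k, by omega⟩ : Fin N) = i := Fin.ext (by simp only; omega)
    have := hP.1.le_apply i
    simp only [rightPart, hi]
    omega

lemma leftPart_glue {Q : Fin k → Fin k} (hQ : IsParentFn k Q) (R : Fin (N - k) → Fin (N - k)) :
    leftPart hkN (glue hkN Q R) = Q := by
  funext t
  ext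
  simp only [leftPart]
  rcases Nat.lt_or_ge ((t : ℕ) + 1) k with ht | ht
  · rw [glue_val_of_lt hkN Q R (by simp only; omega) ht]
    have := (Q t).isLt
    simp only [Nat.add_sub_cancel, Fin.eta]
    omega
  · rw [glue_val_of_le hkN Q R ht, hQ.2 t (by omega)]
    omega

lemma rightPart_glue (Q : Fin k → Fin k) (R : Fin (N - k) → Fin (N - k)) :
    rightPart (glue hkN Q R) = R := by
  funext s
  ext
  simp only [rightPart]
  rw [glue_val_of_le hkN Q R (by simp only; omega)]
  simp only [Nat.add_sub_cancel, Fin.eta]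

end Inverse

def rootFiberEquiv {N k : ℕ} (hk : 0 < k) (hkN : k < N) :
    {P : PF N // (P.1 ⟨0, by omega⟩ : ℕ) = k} ≃ PF k × PF (N - k) where
  toFun P :=
    (⟨leftPart hkN P.1.1, isParentFn_leftPart hkN P.1.2.1, condP3_leftPart hkN P.1.2.2⟩,
      ⟨rightPart P.1.1, isParentFn_rightPart P.1.2.1, condP3_rightPart P.1.2.2⟩)
  invFun QR :=
    ⟨⟨glue hkN QR.1.1 QR.2.1, isParentFn_glue hkN QR.1.2.1 QR.2.2.1,
      condP3_glue hkN QR.1.2.2 QR.2.2.2⟩, glue_val_of_eq_zero hkN _ _ hk rfl⟩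
  left_inv P := Subtype.ext <| Subtype.ext <| glue_leftPart_rightPart hkN hk P.1.2 P.2
  right_inv QR := Prod.ext (Subtype.ext <| leftPart_glue hkN QR.1.2.1 _)
    (Subtype.ext <| rightPart_glue hkN _ _)

lemma card_root_fiber {N k : ℕ} (hk : 0 < k) (hkN : k < N) :
    Nat.card {P : PF N // (P.1 ⟨0, by omega⟩ : ℕ) = k} = cardPF k * cardPF (N - k) := by
  rw [Nat.card_congr (rootFiberEquiv hk hkN), Nat.card_prod, cardPF, cardPF]

/-- The Catalan-type recurrence `a_N = ∑_{j=2}^{N} a_{j-1} * a_{N-j+1}` for `N ≥ 2`. -/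
theorem cardPF_recurrence (N : ℕ) (hN : 2 ≤ N) :
    cardPF N = ∑ j ∈ Finset.Icc 2 N, cardPF (j - 1) * cardPF (N - j + 1) := by
  classical
  have hN₀ : 0 < N := by omega
  let root : PF N → ℕ := fun P => (P.1 ⟨0, hN₀⟩ : ℕ) + 1
  have root_mem (P : PF N) (_ : P ∈ univ) : root P ∈ Icc 2 N := by
    have h₁ := P.2.1.1 ⟨0, hN₀⟩ (by simp only; omega)
    have h₂ := (P.1 ⟨0, hN₀⟩).isLt
    rw [Fin.lt_def, Fin.val_mk] at h₁
    simp only [mem_Icc, root]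
    omega
  rw [cardPF, Nat.card_eq_fintype_card, ← card_univ, card_eq_sum_card_fiberwise root_mem]
  refine sum_congr rfl fun j hj => ?_
  rw [mem_Icc] at hj
  rw [show N - j + 1 = N - (j - 1) by omega, ← card_root_fiber (by omega) (by omega),
    Nat.card_eq_fintype_card, Fintype.card_subtype]
  congr 1
  ext P
  simp only [mem_filter, mem_univ, true_and, root]
  omega
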